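/- Two tame persistence vector spaces over a field κ are isomorphic if and only if their bar codes are equal, i.e., if V ≅ ⊕_{k∈K} I[a_k, b_k] and W ≅ ⊕_{l∈L} I[a'_l, b'_l] are decompositions into finitely many interval persistence modules, then V and W are isomorphic as persistence vector spaces if and only if the finite multiset of intervals {[a_k, b_k] : k ∈ K} equals the finite multiset {[a'_l, b'_l] : l ∈ L}. -/

import Mathlib

open scoped Classical

/-- A persistence vector space over a field `κ`: a family of `κ`-vector spaces `V n`
(`n ∈ ℕ`) together with linear structure maps `φ n : V n → V (n+1)`. -/
structure PersistenceVS (κ : Type) [Field κ] : Type 1 where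
  V : ℕ → Type
  instAdd : ∀ n, AddCommGroup (V n)
  instMod : ∀ n, Module κ (V n)
  φ : ∀ n, V n →ₗ[κ] V (n + 1)

attribute [instance] PersistenceVS.instAdd PersistenceVS.instMod

/-- A morphism of persistence vector spaces: a family of linear maps commuting with
the structure maps. -/
structure PersistenceHom {κ : Type} [Field κ] (U W : PersistenceVS κ) where
  ω : ∀ n, U.V n →ₗ[κ] W.V n
  comm : ∀ n, (W.φ n).comp (ω n) = (ω (n + 1)).comp (U.φ n)

/-- Two persistence vector spaces are isomorphic iff there is a morphism all of whose
components are bijective. -/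
def PersistenceVS.Isomorphic {κ : Type} [Field κ] (U W : PersistenceVS κ) : Prop :=
  ∃ f : PersistenceHom U W, ∀ n, Function.Bijective (f.ω n)

/-- A persistence vector space is tame iff each component is finite dimensional and
the structure maps are isomorphisms for all sufficiently large `n`. -/
def PersistenceVS.Tame {κ : Type} [Field κ] (V : PersistenceVS κ) : Prop :=
  (∀ n, FiniteDimensional κ (V.V n)) ∧ ∃ N, ∀ n, N ≤ n → Function.Bijective (V.φ n)

/-- The `n`-th component of the interval persistence module `I[a,b]`, realized as the
submodule `⊤` of `κ` when `a ≤ n ≤ b` and `⊥` otherwise. -/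
noncomputable def intervalSub (κ : Type) [Field κ] (a : ℕ) (b : ℕ∞) (n : ℕ) :
    Submodule κ κ :=
  if a ≤ n ∧ (n : ℕ∞) ≤ b then ⊤ else ⊥

/-- The interval persistence module `I[a,b]`: component `κ` for `a ≤ n ≤ b` and `0`
otherwise, with structure maps the identity when `a ≤ n < b` and zero otherwise. -/
noncomputable def intervalModule (κ : Type) [Field κ] (a : ℕ) (b : ℕ∞) :
    PersistenceVS κ where
  V n := ↥(intervalSub κ a b n)
  instAdd _ := inferInstance
  instMod _ := inferInstance
  φ n :=
    if h : intervalSub κ a b n ≤ intervalSub κ a b (n + 1) then Submodule.inclusion h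
    else 0

/-- Direct sum (over a finite index type) of persistence vector spaces. -/
def directSumPVS {κ : Type} [Field κ] {ι : Type} [Fintype ι]
    (Vs : ι → PersistenceVS κ) : PersistenceVS κ where
  V n := ∀ k, (Vs k).V n
  instAdd _ := inferInstance
  instMod _ := inferInstance
  φ n := LinearMap.pi fun k => ((Vs k).φ n).comp (LinearMap.proj k)

/-- The composite structure map `φ_{i,j} : V i → V j` for `i ≤ j` (identity if `i = j`). -/
noncomputable def PersistenceVS.phiLE {κ : Type} [Field κ] (V : PersistenceVS κ)
    {i j : ℕ} (h : i ≤ j) : V.V i →ₗ[κ] V.V j :=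
  Nat.leRecOn h (fun {k} g => (V.φ k).comp g) LinearMap.id

/-! The rank of the composite structure map `φ_{i,j} : V_i → V_j` is an isomorphism invariant.
For `⊕ₖ I[a_k, b_k]` it is the number of bars with `a_k ≤ i` and `j ≤ b_k`, and these numbers
determine the multiset of bars as long as `a_k ≤ b_k`: differences in `i` isolate the bars born
at `p`, differences in `j` then isolate those dying at `m`, and the bars born at `p` that never
die are those still alive beyond every finite endpoint. Conversely, equal bar codes give a
bijection `K ≃ L` matching the intervals, and reindexing a direct sum is an isomorphism. -/

open Module LinearMap

theorem Multiset.countP_eq_countP_and_add_countP_and_not {α : Type*} (s : Multiset α)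
    (P Q : α → Prop) [DecidablePred P] [DecidablePred Q] :
    s.countP P = s.countP (fun x => P x ∧ Q x) + s.countP fun x => P x ∧ ¬Q x := by
  rw [Multiset.countP_eq_countP_filter_add s P Q, Multiset.countP_filter, Multiset.countP_filter]

theorem Fintype.exists_equiv_of_map_univ_eq {α β γ : Type*} [Fintype α] [Fintype β]
    {f : α → γ} {g : β → γ} (h : Finset.univ.val.map f = Finset.univ.val.map g) :
    ∃ e : α ≃ β, ∀ x, g (e x) = f x := by
  have hfib (c : γ) : Fintype.card {x // f x = c} = Fintype.card {y // g y = c} := by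
    have hc := congrArg (Multiset.count c) h
    rw [Multiset.count_map, Multiset.count_map] at hc
    simpa only [Fintype.card_subtype, Finset.card, Finset.filter_val, eq_comm] using hc
  exact ⟨Equiv.ofFiberEquiv fun c => Fintype.equivOfCardEq (hfib c),
    Equiv.ofFiberEquiv_map _⟩

theorem LinearMap.finrank_range_piMap {κ ι : Type} [Field κ] [Fintype ι] {M N : ι → Type}
    [∀ k, AddCommGroup (M k)] [∀ k, Module κ (M k)] [∀ k, AddCommGroup (N k)]
    [∀ k, Module κ (N k)] [∀ k, Module.Finite κ (N k)] (f : ∀ k, M k →ₗ[κ] N k) :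
    finrank κ (range (piMap f)) = ∑ k, finrank κ (range (f k)) := by
  have hf : piMap f =
      piMap (fun k => (range (f k)).subtype) ∘ₗ piMap fun k => (f k).rangeRestrict := rfl
  rw [hf, range_comp_of_range_eq_top _ (range_eq_top.2 (Function.Surjective.piMap fun k =>
      (f k).surjective_rangeRestrict)),
    finrank_range_of_inj (Function.Injective.piMap fun k => (range (f k)).injective_subtype),
    finrank_pi_fintype]

def barcode {K : Type} [Fintype K] (a : K → ℕ) (b : K → ℕ∞) : Multiset (ℕ × ℕ∞) :=
  Finset.univ.val.map fun k => (a k, b k)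

namespace Barcode

variable (S : Multiset (ℕ × ℕ∞))

def rankInvariant (i j : ℕ) : ℕ :=
  S.countP fun x => x.1 ≤ i ∧ (j : ℕ∞) ≤ x.2

def birthCount (p j : ℕ) : ℕ :=
  S.countP fun x => x.1 = p ∧ (j : ℕ∞) ≤ x.2

theorem rankInvariant_zero (j : ℕ) : rankInvariant S 0 j = birthCount S 0 j :=
  Multiset.countP_congr rfl fun x _ => by rw [Nat.le_zero]

theorem rankInvariant_succ (p j : ℕ) :
    rankInvariant S (p + 1) j = birthCount S (p + 1) j + rankInvariant S p j := by
  rw [rankInvariant,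
    Multiset.countP_eq_countP_and_add_countP_and_not _ _ fun x => x.1 = p + 1]
  congr 1 <;> refine Multiset.countP_congr rfl fun x _ => propext ?_ <;> grind

theorem birthCount_eq_count_add (p m : ℕ) :
    birthCount S p m = S.count (p, (m : ℕ∞)) + birthCount S p (m + 1) := by
  rw [birthCount,
    Multiset.countP_eq_countP_and_add_countP_and_not _ _ fun x => x.2 = (m : ℕ∞),
    Multiset.count_eq_card_filter_eq, ← Multiset.countP_eq_card_filter]
  congr 1 <;> refine Multiset.countP_congr rfl fun x _ => propext ?_
  · constructor
    · rintro ⟨⟨hp, -⟩, hm⟩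
      exact Prod.ext hp.symm hm.symm
    · rintro rfl
      exact ⟨⟨rfl, le_rfl⟩, rfl⟩
  · rw [Nat.cast_succ, ENat.add_one_le_iff (ENat.natCast_ne_top m), lt_iff_le_and_ne]
    grind

theorem count_top_eq_birthCount {p J : ℕ} (hJ : ∀ x ∈ S, x.2 ≠ ⊤ → x.2 < J) :
    S.count (p, ⊤) = birthCount S p J := by
  rw [Multiset.count_eq_card_filter_eq, ← Multiset.countP_eq_card_filter]
  refine Multiset.countP_congr rfl fun x hx => propext ⟨?_, ?_⟩
  · rintro rfl
    exact ⟨rfl, le_top⟩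
  · rintro ⟨hp, hx₂⟩
    refine Prod.ext hp.symm (by_contra fun hne => ?_)
    exact (hJ x hx (Ne.symm hne)).not_ge hx₂

theorem exists_ge_forall_snd_lt (p : ℕ) : ∃ J ≥ p, ∀ x ∈ S, x.2 ≠ ⊤ → x.2 < J := by
  obtain ⟨N, hN⟩ := (S.map fun x => x.2.toNat).toFinset.bddAbove
  refine ⟨max N p + 1, by omega, fun x hx hx₂ => ?_⟩
  have hxN : x.2.toNat ≤ N := hN <| by
    simp only [Multiset.mem_toFinset, Finset.mem_coe, Multiset.mem_map]
    exact ⟨x, hx, rfl⟩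
  rw [← ENat.natCast_toNat hx₂]
  exact_mod_cast (by omega : x.2.toNat < max N p + 1)

theorem birthCount_eq_of_rankInvariant_eq {S T : Multiset (ℕ × ℕ∞)}
    (h : ∀ i j, i ≤ j → rankInvariant S i j = rankInvariant T i j) {p j : ℕ} (hpj : p ≤ j) :
    birthCount S p j = birthCount T p j := by
  cases p with
  | zero => simpa only [rankInvariant_zero] using h 0 j hpj
  | succ p =>
    have h₁ := h (p + 1) j hpj
    have h₂ := h p j (by omega)
    rw [rankInvariant_succ, rankInvariant_succ] at h₁
    omega

theorem eq_of_rankInvariant_eq {S T : Multiset (ℕ × ℕ∞)} (hS : ∀ x ∈ S, (x.1 : ℕ∞) ≤ x.2)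
    (hT : ∀ x ∈ T, (x.1 : ℕ∞) ≤ x.2)
    (h : ∀ i j, i ≤ j → rankInvariant S i j = rankInvariant T i j) : S = T := by
  refine Multiset.ext.2 fun ⟨p, q⟩ => ?_
  cases q with
  | top =>
    obtain ⟨J, hpJ, hJ⟩ := exists_ge_forall_snd_lt (S + T) p
    rw [count_top_eq_birthCount S fun x hx => hJ x (Multiset.mem_add.2 (.inl hx)),
      count_top_eq_birthCount T fun x hx => hJ x (Multiset.mem_add.2 (.inr hx)),
      birthCount_eq_of_rankInvariant_eq h hpJ]
  | coe m =>
    by_cases hpm : p ≤ m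
    · have h₁ := birthCount_eq_of_rankInvariant_eq h hpm
      have h₂ := birthCount_eq_of_rankInvariant_eq h (by omega : p ≤ m + 1)
      rw [birthCount_eq_count_add S p m, birthCount_eq_count_add T p m] at h₁
      omega
    · have hmem : ∀ {U : Multiset (ℕ × ℕ∞)}, (∀ x ∈ U, (x.1 : ℕ∞) ≤ x.2) →
          (p, (m : ℕ∞)) ∉ U := fun hU hx => hpm (ENat.natCast_le_natCast.1 (hU _ hx))
      rw [Multiset.count_eq_zero.2 (hmem hS), Multiset.count_eq_zero.2 (hmem hT)]

end Barcode

section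

variable {κ : Type} [Field κ]

namespace PersistenceVS

theorem phiLE_refl (V : PersistenceVS κ) {i : ℕ} (h : i ≤ i) : V.phiLE h = LinearMap.id :=
  Nat.leRecOn_self _

theorem phiLE_succ (V : PersistenceVS κ) {i j : ℕ} (h : i ≤ j) (h' : i ≤ j + 1) :
    V.phiLE h' = V.φ j ∘ₗ V.phiLE h :=
  Nat.leRecOn_succ h _

end PersistenceVS

theorem PersistenceHom.comp_phiLE {U W : PersistenceVS κ} (f : PersistenceHom U W)
    {i j : ℕ} (h : i ≤ j) : f.ω j ∘ₗ U.phiLE h = W.phiLE h ∘ₗ f.ω i := by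
  induction j, h using Nat.le_induction with
  | base => rw [U.phiLE_refl, W.phiLE_refl]; rfl
  | succ j hij ih =>
    rw [U.phiLE_succ hij, W.phiLE_succ hij, ← comp_assoc, ← f.comm, comp_assoc, ih, comp_assoc]

namespace PersistenceVS.Isomorphic

variable {U W X : PersistenceVS κ}

theorem symm (e : U.Isomorphic W) : W.Isomorphic U := by
  obtain ⟨f, hf⟩ := e
  let e n := LinearEquiv.ofBijective (f.ω n) (hf n)
  refine ⟨⟨fun n => (e n).symm.toLinearMap, fun n => ?_⟩, fun n => (e n).symm.bijective⟩
  ext x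
  apply (e (n + 1)).injective
  have hx := LinearMap.congr_fun (f.comm n) ((e n).symm x)
  simp only [LinearMap.comp_apply, LinearEquiv.coe_coe] at hx ⊢
  rw [LinearEquiv.apply_symm_apply]
  exact hx.symm.trans (congrArg (W.φ n) ((e n).apply_symm_apply x))

theorem trans (e₁ : U.Isomorphic W) (e₂ : W.Isomorphic X) : U.Isomorphic X := by
  obtain ⟨f, hf⟩ := e₁
  obtain ⟨g, hg⟩ := e₂
  refine ⟨⟨fun n => g.ω n ∘ₗ f.ω n, fun n => ?_⟩, fun n => (hg n).comp (hf n)⟩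
  rw [← comp_assoc, g.comm, comp_assoc, f.comm, comp_assoc]

theorem finrank_range_phiLE_eq (e : U.Isomorphic W) {i j : ℕ} (h : i ≤ j) :
    finrank κ (range (U.phiLE h)) = finrank κ (range (W.phiLE h)) := by
  obtain ⟨f, hf⟩ := e
  calc finrank κ (range (U.phiLE h))
      = finrank κ (range (f.ω j ∘ₗ U.phiLE h)) := by
        rw [range_comp]
        exact (LinearEquiv.finrank_map_eq (LinearEquiv.ofBijective _ (hf j)) _).symm
    _ = finrank κ (range (W.phiLE h)) := by
        rw [f.comp_phiLE, range_comp_of_range_eq_top _ (range_eq_top.2 (hf i).2)]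

end PersistenceVS.Isomorphic

theorem directSumPVS_phiLE {ι : Type} [Fintype ι] (Vs : ι → PersistenceVS κ) {i j : ℕ}
    (h : i ≤ j) : (directSumPVS Vs).phiLE h = piMap fun k => (Vs k).phiLE h := by
  induction j, h using Nat.le_induction with
  | base => simp only [PersistenceVS.phiLE_refl]; rfl
  | succ j hij ih => simp only [PersistenceVS.phiLE_succ _ hij, ih]; rfl

theorem directSumPVS_isomorphic_reindex {ι ι' : Type} [Fintype ι] [Fintype ι'] (σ : ι ≃ ι')
    (Ws : ι' → PersistenceVS κ) :
    (directSumPVS Ws).Isomorphic (directSumPVS fun k => Ws (σ k)) :=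
  ⟨⟨fun n => (LinearEquiv.piCongrLeft' κ (fun l => (Ws l).V n) σ.symm).toLinearMap,
    fun _ => rfl⟩, fun _ => LinearEquiv.bijective _⟩

section Interval

variable (a : ℕ) (b : ℕ∞)

instance (n : ℕ) : Module.Finite κ ((intervalModule κ a b).V n) :=
  inferInstanceAs (Module.Finite κ (intervalSub κ a b n))

theorem finrank_intervalModule_V_eq_zero {n : ℕ} (h : ¬(a ≤ n ∧ (n : ℕ∞) ≤ b)) :
    finrank κ ((intervalModule κ a b).V n) = 0 := by
  change finrank κ (intervalSub κ a b n) = 0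
  rw [intervalSub, if_neg h, finrank_bot]

theorem intervalModule_φ_surjective {n : ℕ} (ha : a ≤ n) (hb : ((n + 1 : ℕ) : ℕ∞) ≤ b) :
    Function.Surjective ((intervalModule κ a b).φ n) := by
  have hn : intervalSub κ a b n = ⊤ := if_pos ⟨ha, le_trans (by simp) hb⟩
  have hn' : intervalSub κ a b (n + 1) = ⊤ := if_pos ⟨by omega, hb⟩
  have hle : intervalSub κ a b n ≤ intervalSub κ a b (n + 1) := by rw [hn, hn']
  have hφ : (intervalModule κ a b).φ n = Submodule.inclusion hle := dif_pos hle
  rw [hφ]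
  rintro ⟨y, -⟩
  exact ⟨⟨y, hn ▸ Submodule.mem_top⟩, rfl⟩

theorem intervalModule_phiLE_surjective {i j : ℕ} (h : i ≤ j) (ha : a ≤ i)
    (hb : (j : ℕ∞) ≤ b) : Function.Surjective ((intervalModule κ a b).phiLE h) := by
  induction j, h using Nat.le_induction with
  | base => rw [PersistenceVS.phiLE_refl]; exact Function.surjective_id
  | succ j hij ih =>
    rw [PersistenceVS.phiLE_succ _ hij, coe_comp]
    exact (intervalModule_φ_surjective a b (ha.trans hij) hb).comp
      (ih (le_trans (by simp) hb))

theorem finrank_range_intervalModule_phiLE {i j : ℕ} (h : i ≤ j) :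
    finrank κ (range ((intervalModule κ a b).phiLE h)) =
      if a ≤ i ∧ (j : ℕ∞) ≤ b then 1 else 0 := by
  split_ifs with hab
  · rw [range_eq_top.2 (intervalModule_phiLE_surjective a b h hab.1 hab.2), finrank_top]
    change finrank κ (intervalSub κ a b j) = 1
    rw [intervalSub, if_pos ⟨hab.1.trans h, hab.2⟩, finrank_top, finrank_self]
  · by_cases ha : a ≤ i
    · have := finrank_intervalModule_V_eq_zero (κ := κ) a b (n := j) (by tauto)
      have := Submodule.finrank_le (range ((intervalModule κ a b).phiLE h))
      omega
    · have := finrank_intervalModule_V_eq_zero (κ := κ) a b (n := i) (by tauto)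
      have := finrank_range_le ((intervalModule κ a b).phiLE h)
      omega

end Interval

theorem finrank_range_directSumPVS_phiLE {ι : Type} [Fintype ι] (Vs : ι → PersistenceVS κ)
    [∀ k n, Module.Finite κ ((Vs k).V n)] {i j : ℕ} (h : i ≤ j) :
    finrank κ (range ((directSumPVS Vs).phiLE h)) = ∑ k, finrank κ (range ((Vs k).phiLE h)) :=
  directSumPVS_phiLE Vs h ▸ finrank_range_piMap _

theorem finrank_range_directSumPVS_intervalModule_phiLE (κ : Type) [Field κ] {K : Type}
    [Fintype K] (a : K → ℕ) (b : K → ℕ∞) {i j : ℕ} (h : i ≤ j) :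
    finrank κ (range ((directSumPVS fun k => intervalModule κ (a k) (b k)).phiLE h)) =
      Barcode.rankInvariant (barcode a b) i j := by
  rw [finrank_range_directSumPVS_phiLE, Barcode.rankInvariant, barcode,
    Multiset.countP_map, ← Finset.filter_val, Finset.card_val, Finset.card_filter]
  exact Finset.sum_congr rfl fun k _ => finrank_range_intervalModule_phiLE _ _ h

end

/-- Two tame persistence vector spaces, given with decompositions into
finitely many interval modules, are isomorphic iff their bar codes (the finite
multisets of intervals, recorded as pairs in `ℕ × ℕ∞`) are equal. -/
theorem stmt12 {κ K L : Type} [Field κ] [Fintype K] [Fintype L]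
    (a : K → ℕ) (b : K → ℕ∞) (a' : L → ℕ) (b' : L → ℕ∞)
    (hab : ∀ k, (a k : ℕ∞) ≤ b k) (hab' : ∀ l, (a' l : ℕ∞) ≤ b' l)
    (V W : PersistenceVS κ)
    (hV : V.Isomorphic (directSumPVS fun k : K => intervalModule κ (a k) (b k)))
    (hW : W.Isomorphic (directSumPVS fun l : L => intervalModule κ (a' l) (b' l))) :
    V.Isomorphic W ↔
      (Finset.univ.val.map fun k : K => (a k, b k)) =
        (Finset.univ.val.map fun l : L => (a' l, b' l)) := by
  change _ ↔ barcode a b = barcode a' b'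
  constructor
  · intro hVW
    have hsums := (hV.symm.trans hVW).trans hW
    refine Barcode.eq_of_rankInvariant_eq (Multiset.forall_mem_map_iff.2 fun k _ => hab k)
      (Multiset.forall_mem_map_iff.2 fun l _ => hab' l) fun i j h => ?_
    rw [← finrank_range_directSumPVS_intervalModule_phiLE κ a b h,
      ← finrank_range_directSumPVS_intervalModule_phiLE κ a' b' h, hsums.finrank_range_phiLE_eq h]
  · intro h
    obtain ⟨σ, hσ⟩ := Fintype.exists_equiv_of_map_univ_eq h
    have hbars : (fun k => intervalModule κ (a k) (b k)) =
        fun k => intervalModule κ (a' (σ k)) (b' (σ k)) := by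
      funext k
      obtain ⟨ha, hb⟩ := Prod.mk.inj (hσ k)
      rw [ha, hb]
    rw [hbars] at hV
    have hreindex := directSumPVS_isomorphic_reindex σ fun l => intervalModule κ (a' l) (b' l)
    exact (hV.trans hreindex.symm).trans hW.symm
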